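/- arXiv:1510.02398 — 8 statements merged into one kernel-verified Lean document; each statement's English description precedes it below -/
import Mathlib

section
/- Let M > 0 and Λ > 0 satisfy 9M²Λ < 1. Then the quartic polynomial Δ(r) = r²(1 − Λr²/3) − 2Mr has exactly four real roots, all distinct: one strictly negative root, the root r = 0, and two strictly positive roots. That is, there exist real numbers r₀ < 0 < r₋ < r₊ such that for every real r one has Δ(r) = 0 if and only if r ∈ {r₀, 0, r₋, r₊}. -/
/-- The Schwarzschild–de Sitter potential `Δ(r) = r²(1 − Λr²/3) − 2Mr`. -/
noncomputable def SdSDelta (M Λ : ℝ) (r : ℝ) : ℝ := r ^ 2 * (1 - Λ * r ^ 2 / 3) - 2 * M * r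

/-- A quadratic vanishing at three distinct points is identically zero. -/
lemma quad_zero (A B C x y z : ℝ) (hxy : x ≠ y) (hyz : y ≠ z) (hxz : x ≠ z)
    (h1 : A * x ^ 2 + B * x + C = 0) (h2 : A * y ^ 2 + B * y + C = 0)
    (h3 : A * z ^ 2 + B * z + C = 0) : A = 0 ∧ B = 0 ∧ C = 0 := by
  have e1 : (x - y) * (A * (x + y) + B) = 0 := by linear_combination h1 - h2
  have e2 : (y - z) * (A * (y + z) + B) = 0 := by linear_combination h2 - h3
  have f1 : A * (x + y) + B = 0 :=
    (mul_eq_zero.mp e1).resolve_left (sub_ne_zero.mpr hxy)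
  have f2 : A * (y + z) + B = 0 :=
    (mul_eq_zero.mp e2).resolve_left (sub_ne_zero.mpr hyz)
  have e3 : A * (x - z) = 0 := by linear_combination f1 - f2
  have hA : A = 0 := (mul_eq_zero.mp e3).resolve_right (sub_ne_zero.mpr hxz)
  have hB : B = 0 := by linear_combination f1 - (x + y) * hA
  refine ⟨hA, hB, ?_⟩
  linear_combination h1 - x ^ 2 * hA - x * hB

/-- For `M, Λ > 0` with `9M²Λ < 1`, the quartic `Δ(r) = r²(1 − Λr²/3) − 2Mr` has exactly
four real roots, all distinct: one negative root, the root `0`, and two positive roots. -/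
theorem sdS_four_roots (M Λ : ℝ) (hM : 0 < M) (hΛ : 0 < Λ) (hnd : 9 * M ^ 2 * Λ < 1) :
    ∃ r₀ rm rp : ℝ, r₀ < 0 ∧ 0 < rm ∧ rm < rp ∧
      ∀ r : ℝ, SdSDelta M Λ r = 0 ↔ (r = r₀ ∨ r = 0 ∨ r = rm ∨ r = rp) := by
  set c : ℝ := Λ / 3 with hc
  have hcpos : 0 < c := by positivity
  set f : ℝ → ℝ := fun r => r - 2 * M - c * r ^ 3 with hf
  have hfc : Continuous f := by continuity
  set u : ℝ := Real.sqrt Λ with hu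
  have hupos : 0 < u := Real.sqrt_pos.mpr hΛ
  have hu2 : u ^ 2 = Λ := Real.sq_sqrt hΛ.le
  have hMu : 3 * M * u < 1 := by nlinarith [sq_nonneg (3 * M * u - 1)]
  set s : ℝ := 3 / u + 2 * M with hs
  have h3u : 0 < 3 / u := by positivity
  have hspos : 0 < s := by positivity
  have hsM : M < s := by rw [hs]; linarith
  have hs2 : s ^ 2 ≥ 9 / Λ := by
    have hsge : 3 / u ≤ s := by rw [hs]; linarith
    have h3u2 : (3 / u) ^ 2 = 9 / Λ := by rw [div_pow, hu2]; norm_num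
    nlinarith
  have hcs3 : c * s ^ 3 ≥ 3 * s := by
    calc c * s ^ 3 = c * (s ^ 2 * s) := by ring
      _ ≥ c * (9 / Λ * s) := by
        apply mul_le_mul_of_nonneg_left _ hcpos.le
        exact mul_le_mul_of_nonneg_right hs2 hspos.le
      _ = 3 * s := by rw [hc]; field_simp; ring
  -- f(-s) > 0
  have hfs : 0 < f (-s) := by
    simp only [hf]
    nlinarith
  -- f(0) < 0
  have hf0 : f 0 < 0 := by simp only [hf]; norm_num; positivity
  -- f(1/u) > 0
  have hfstar : 0 < f (1 / u) := by
    simp only [hf]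
    have h1 : c * (1 / u) ^ 3 = 1 / (3 * u) := by
      rw [hc]; field_simp; nlinarith
    rw [h1, show 1 / u - 2 * M - 1 / (3 * u) = (2 - 6 * M * u) / (3 * u) by
      field_simp; ring]
    apply div_pos (by linarith) (by positivity)
  -- f(s) < 0
  have hfsp : f s < 0 := by
    simp only [hf]
    nlinarith
  have hlt1 : -s < 0 := by linarith
  have hlt2 : (0:ℝ) < 1 / u := by positivity
  have hlt3 : 1 / u < s := by
    have : (1:ℝ) / u < 3 / u := (div_lt_div_iff_of_pos_right hupos).mpr (by norm_num)
    linarith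
  -- three roots by IVT
  obtain ⟨r₀, hr₀mem, hr₀⟩ :=
    intermediate_value_Ioo' hlt1.le hfc.continuousOn (Set.mem_Ioo.mpr ⟨hf0, hfs⟩)
  obtain ⟨rm, hrmmem, hrm⟩ :=
    intermediate_value_Ioo hlt2.le hfc.continuousOn (Set.mem_Ioo.mpr ⟨hf0, hfstar⟩)
  obtain ⟨rp, hrpmem, hrp⟩ :=
    intermediate_value_Ioo' hlt3.le hfc.continuousOn (Set.mem_Ioo.mpr ⟨hfsp, hfstar⟩)
  obtain ⟨_, hr₀neg⟩ := hr₀mem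
  obtain ⟨hrmpos, hrmlt⟩ := hrmmem
  obtain ⟨hrplt, _⟩ := hrpmem
  have hord1 : r₀ < rm := lt_trans hr₀neg hrmpos
  have hord2 : rm < rp := lt_trans hrmlt hrplt
  have hr₀' : r₀ - 2 * M - c * r₀ ^ 3 = 0 := hr₀
  have hrm' : rm - 2 * M - c * rm ^ 3 = 0 := hrm
  have hrp' : rp - 2 * M - c * rp ^ 3 = 0 := hrp
  obtain ⟨hA0, hB0, hC0⟩ := quad_zero (-c * (r₀ + rm + rp))
    (1 + c * (r₀ * rm + r₀ * rp + rm * rp)) (-2 * M - c * (r₀ * rm * rp))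
    r₀ rm rp hord1.ne hord2.ne (lt_trans hord1 hord2).ne
    (by linear_combination hr₀') (by linear_combination hrm') (by linear_combination hrp')
  have key : ∀ r : ℝ, SdSDelta M Λ r = -c * r * (r - r₀) * (r - rm) * (r - rp) := by
    intro r
    simp only [SdSDelta]
    linear_combination r ^ 3 * hA0 + r ^ 2 * hB0 + r * hC0 + r ^ 4 * hc
  refine ⟨r₀, rm, rp, hr₀neg, hrmpos, hord2, fun r => ?_⟩
  rw [key r]
  constructor
  · intro h
    rcases mul_eq_zero.mp h with h | h
    · rcases mul_eq_zero.mp h with h | h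
      · rcases mul_eq_zero.mp h with h | h
        · rcases mul_eq_zero.mp h with h | h
          · exact absurd h (neg_ne_zero.mpr hcpos.ne')
          · exact Or.inr (Or.inl h)
        · exact Or.inl (sub_eq_zero.mp h)
      · exact Or.inr (Or.inr (Or.inl (sub_eq_zero.mp h)))
    · exact Or.inr (Or.inr (Or.inr (sub_eq_zero.mp h)))
  · rintro (rfl | rfl | rfl | rfl) <;> ring
end

section
/- Fix M > 0. For each Λ ∈ (0, 1/(9M²)) let r₋(Λ) denote the smallest strictly positive root of the polynomial Δ(r) = r²(1 − Λr²/3) − 2Mr. Then r₋(Λ) tends to 2M as Λ → 0⁺. -/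
/-- Fix `M > 0`.  If for each `Λ ∈ (0, 1/(9M²))`, `rm Λ` is the smallest strictly positive
root of `Δ(r) = r²(1 − Λr²/3) − 2Mr`, then `rm Λ → 2M` as `Λ → 0⁺`. -/
theorem sdS_black_hole_radius_tendsto (M : ℝ) (hM : 0 < M) (rm : ℝ → ℝ)
    (hrm : ∀ Λ : ℝ, 0 < Λ → Λ < 1 / (9 * M ^ 2) →
      0 < rm Λ ∧ SdSDelta M Λ (rm Λ) = 0 ∧
      ∀ r : ℝ, 0 < r → SdSDelta M Λ r = 0 → rm Λ ≤ r) :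
    Filter.Tendsto rm (nhdsWithin 0 (Set.Ioi 0)) (nhds (2 * M)) := by
  have hM2 : (0:ℝ) < 1 / (9 * M ^ 2) := by positivity
  have key : ∀ Λ ∈ Set.Ioo (0:ℝ) (1 / (9 * M ^ 2)),
      2 * M ≤ rm Λ ∧ rm Λ ≤ 2 * M + 9 * M ^ 3 * Λ := by
    rintro Λ ⟨hΛ0, hΛ1⟩
    obtain ⟨hpos, hroot, hmin⟩ := hrm Λ hΛ0 hΛ1
    have hΛM : 9 * Λ * M ^ 2 < 1 := by
      rw [lt_div_iff₀ (by positivity)] at hΛ1; nlinarith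
    unfold SdSDelta at hroot
    have heq : rm Λ = 2 * M + Λ * (rm Λ) ^ 3 / 3 := by
      have h3 : rm Λ * (rm Λ - (2 * M + Λ * (rm Λ) ^ 3 / 3)) = 0 := by ring_nf; nlinarith [hroot]
      rcases mul_eq_zero.mp h3 with h | h
      · exact absurd h (ne_of_gt hpos)
      · linarith
    have hlow : 2 * M ≤ rm Λ := by nlinarith [pow_pos hpos 3]
    -- root in [2M, 3M]
    set f : ℝ → ℝ := fun r => r * (1 - Λ * r ^ 2 / 3) - 2 * M with hf
    have hcont : ContinuousOn f (Set.Icc (2 * M) (3 * M)) := by fun_prop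
    have hle : 2 * M ≤ 3 * M := by linarith
    have hmem : (0:ℝ) ∈ Set.Icc (f (2 * M)) (f (3 * M)) := by
      constructor
      · simp only [hf]; nlinarith [mul_pos hΛ0 (pow_pos hM 3)]
      · simp only [hf]; nlinarith [mul_pos hΛ0 (pow_pos hM 3)]
    obtain ⟨r, hrIcc, hfr⟩ := intermediate_value_Icc hle hcont hmem
    have hr0 : 0 < r := lt_of_lt_of_le (by linarith) hrIcc.1
    have hΔr : SdSDelta M Λ r = 0 := by
      unfold SdSDelta
      have : r * f r = 0 := by rw [hfr]; ring
      simp only [hf] at this; nlinarith [this]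
    have hrmle : rm Λ ≤ r := hmin r hr0 hΔr
    have hrm3 : rm Λ ≤ 3 * M := le_trans hrmle hrIcc.2
    constructor
    · exact hlow
    · have h27 : Λ * (rm Λ) ^ 3 ≤ Λ * (3 * M) ^ 3 :=
        mul_le_mul_of_nonneg_left (pow_le_pow_left₀ hpos.le hrm3 3) hΛ0.le
      nlinarith [h27]
  have hmemIoo : Set.Ioo (0:ℝ) (1 / (9 * M ^ 2)) ∈ nhdsWithin 0 (Set.Ioi 0) :=
    Ioo_mem_nhdsGT_of_mem ⟨le_refl 0, hM2⟩
  have h1 : Filter.Tendsto (fun _ : ℝ => 2 * M) (nhdsWithin 0 (Set.Ioi 0)) (nhds (2 * M)) :=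
    tendsto_const_nhds
  have h2 : Filter.Tendsto (fun Λ : ℝ => 2 * M + 9 * M ^ 3 * Λ)
      (nhdsWithin 0 (Set.Ioi 0)) (nhds (2 * M)) := by
    have hc : Continuous fun Λ : ℝ => 2 * M + 9 * M ^ 3 * Λ := by fun_prop
    have : Filter.Tendsto (fun Λ : ℝ => 2 * M + 9 * M ^ 3 * Λ) (nhds 0)
        (nhds (2 * M + 9 * M ^ 3 * 0)) := hc.tendsto 0
    simpa using this.mono_left nhdsWithin_le_nhds
  refine tendsto_of_tendsto_of_tendsto_of_le_of_le' h1 h2 ?_ ?_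
  · filter_upwards [hmemIoo] with Λ hΛ using (key Λ hΛ).1
  · filter_upwards [hmemIoo] with Λ hΛ using (key Λ hΛ).2
end

section
/- Fix m > 0 and M > 0. There exist Λ₀ ∈ (0, 1/(9M²)) and C > 0 such that for every Λ ∈ (0, Λ₀] and every r ∈ (r₋, r₊) one has V(r) ≥ C·Δ(r), where Δ(r) = r²(1 − Λr²/3) − 2Mr, r₋ < r₊ are the two positive roots of Δ, and V(r) = Δ(r)·(−2Λ/(3r²) + 2M/r⁵ + m²). -/
/-- The effective potential `V(r) = Δ(r)·(−2Λ/(3r²) + 2M/r⁵ + m²)` of the stationary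
Klein–Gordon operator with mass `m`. -/
noncomputable def SdSV (m M Λ : ℝ) (r : ℝ) : ℝ :=
  SdSDelta M Λ r * (-(2 * Λ) / (3 * r ^ 2) + 2 * M / r ^ 5 + m ^ 2)

/-- Fix `m, M > 0`.  There exist `Λ₀ ∈ (0, 1/(9M²))` and `C > 0` such that for every
`Λ ∈ (0, Λ₀]`, with `r₋ < r₊` the two positive roots of `Δ`, one has `V(r) ≥ C·Δ(r)`
for every `r ∈ (r₋, r₊)`. -/
theorem sdS_potential_lower_bound (m M : ℝ) (hm : 0 < m) (hM : 0 < M) :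
    ∃ Λ₀ C : ℝ, 0 < Λ₀ ∧ Λ₀ < 1 / (9 * M ^ 2) ∧ 0 < C ∧
      ∀ Λ : ℝ, 0 < Λ → Λ ≤ Λ₀ →
        ∀ rm rp : ℝ, 0 < rm → rm < rp →
          SdSDelta M Λ rm = 0 → SdSDelta M Λ rp = 0 →
          ∀ r ∈ Set.Ioo rm rp, C * SdSDelta M Λ r ≤ SdSV m M Λ r := by
  refine ⟨min (1 / (18 * M ^ 2)) (3 * M ^ 2 * m ^ 2), m ^ 2 / 2, ?_, ?_, by positivity, ?_⟩
  · exact lt_min (by positivity) (by positivity)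
  · calc min (1 / (18 * M ^ 2)) (3 * M ^ 2 * m ^ 2) ≤ 1 / (18 * M ^ 2) := min_le_left _ _
      _ < 1 / (9 * M ^ 2) := by
        rw [div_lt_div_iff₀ (by positivity) (by positivity)]; nlinarith
  intro Λ hΛ hΛ0 rm rp hrm hlt hΔm hΔp r hr
  obtain ⟨hr1, hr2⟩ := hr
  have hrpos : 0 < r := hrm.trans hr1
  have hΛ0' : Λ ≤ 3 * M ^ 2 * m ^ 2 := hΛ0.trans (min_le_right _ _)
  -- root equations divided by r
  have e1 : rm - Λ * rm ^ 3 / 3 = 2 * M := by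
    have h : rm * (rm - Λ * rm ^ 3 / 3 - 2 * M) = 0 := by
      unfold SdSDelta at hΔm; linear_combination hΔm
    rcases mul_eq_zero.1 h with h' | h'
    · exact absurd h' hrm.ne'
    · linarith
  have e2 : rp - Λ * rp ^ 3 / 3 = 2 * M := by
    have hrp : 0 < rp := hrm.trans hlt
    have h : rp * (rp - Λ * rp ^ 3 / 3 - 2 * M) = 0 := by
      unfold SdSDelta at hΔp; linear_combination hΔp
    rcases mul_eq_zero.1 h with h' | h'
    · exact absurd h' hrp.ne'
    · linarith
  have hsum : Λ / 3 * (rm ^ 2 + rm * rp + rp ^ 2) = 1 := by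
    have h : (rm - rp) * (1 - Λ / 3 * (rm ^ 2 + rm * rp + rp ^ 2)) = 0 := by
      linear_combination e1 - e2
    rcases mul_eq_zero.1 h with h' | h'
    · exact absurd h' (sub_ne_zero.2 hlt.ne)
    · linarith
  -- factorization of Δ on the interval
  have hfac : SdSDelta M Λ r = Λ / 3 * (r * ((r - rm) * ((rp - r) * (rp + r + rm)))) := by
    unfold SdSDelta
    linear_combination r * e1 - r * (r - rm) * hsum
  have hΔpos : 0 < SdSDelta M Λ r := by
    rw [hfac]
    have h1 : 0 < r - rm := by linarith
    have h2 : 0 < rp - r := by linarith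
    have h3 : 0 < rp + r + rm := by linarith
    exact mul_pos (by positivity) (mul_pos hrpos (mul_pos h1 (mul_pos h2 h3)))
  -- rm > 2M, hence r > 2M
  have hrm2M : 2 * M < rm := by nlinarith [pow_pos hrm 3]
  have hr2M : 2 * M < r := hrm2M.trans hr1
  have hrsq : 4 * M ^ 2 < r ^ 2 := by nlinarith
  -- the factor is at least m²/2
  have hdiv : 2 * Λ / (3 * r ^ 2) ≤ m ^ 2 / 2 := by
    rw [div_le_iff₀ (by positivity)]
    nlinarith [mul_le_mul_of_nonneg_left hrsq.le (sq_nonneg m)]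
  have hF : m ^ 2 / 2 ≤ -(2 * Λ) / (3 * r ^ 2) + 2 * M / r ^ 5 + m ^ 2 := by
    have h2 : 0 ≤ 2 * M / r ^ 5 := by positivity
    have : -(2 * Λ) / (3 * r ^ 2) = -(2 * Λ / (3 * r ^ 2)) := by ring
    rw [this]; linarith
  unfold SdSV
  calc m ^ 2 / 2 * SdSDelta M Λ r
      ≤ (-(2 * Λ) / (3 * r ^ 2) + 2 * M / r ^ 5 + m ^ 2) * SdSDelta M Λ r :=
        mul_le_mul_of_nonneg_right hF hΔpos.le
    _ = SdSDelta M Λ r * (-(2 * Λ) / (3 * r ^ 2) + 2 * M / r ^ 5 + m ^ 2) := by ring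
end

section
/- Let δ ∈ (0, 1/2), A > 0, C₀ > 0 and η ∈ (0, 1). Let f : ℝ → ℝ be continuously differentiable with |f(y)| ≤ C₀(1 + |y|)^(−δ) and |f'(y)| ≤ C₀(1 + |y|)^(−1−δ) for all y ∈ ℝ. Let χ : ℝ → [0, 1] be measurable with χ(y) = 0 for y ∉ [0, A], and let ζ : [0, A] → ℝ be continuous with 1 + y·ζ(y) ≥ η for all y ∈ [0, A]. Then there is a constant C > 0 (depending only on δ, A, C₀, η and sup |ζ|) such that for every h ∈ (0, 1]: ∫₀^A χ(y)² · |f((y + y²ζ(y))/h) − f(y/h)|² dy ≤ C·h^(2δ). -/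
/-- L² part of the approximation lemma: for `f ∈ S^{−δ}` (with one derivative),
a cut-off `χ` supported in `[0, A]`, and a perturbation `ζ` with `1 + yζ(y) ≥ η > 0`,
one has `∫₀^A χ(y)²·|f((y + y²ζ(y))/h) − f(y/h)|² dy ≤ C·h^(2δ)` uniformly in
`h ∈ (0, 1]`. -/
theorem approximation_lemma_L2 (δ A C₀ η : ℝ)
    (hδ : δ ∈ Set.Ioo (0 : ℝ) (1 / 2)) (hA : 0 < A) (hC₀ : 0 < C₀)
    (hη : η ∈ Set.Ioo (0 : ℝ) 1)
    (f f' : ℝ → ℝ) (hf : ∀ y : ℝ, HasDerivAt f (f' y) y) (hf'cont : Continuous f')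
    (hfb : ∀ y : ℝ, |f y| ≤ C₀ * (1 + |y|) ^ (-δ))
    (hf'b : ∀ y : ℝ, |f' y| ≤ C₀ * (1 + |y|) ^ (-1 - δ))
    (χ : ℝ → ℝ) (hχmeas : Measurable χ)
    (hχ01 : ∀ y : ℝ, χ y ∈ Set.Icc (0 : ℝ) 1)
    (hχsupp : ∀ y : ℝ, y ∉ Set.Icc (0 : ℝ) A → χ y = 0)
    (ζ : ℝ → ℝ) (hζcont : ContinuousOn ζ (Set.Icc 0 A))
    (hζη : ∀ y ∈ Set.Icc (0 : ℝ) A, η ≤ 1 + y * ζ y) :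
    ∃ C : ℝ, 0 < C ∧ ∀ h ∈ Set.Ioc (0 : ℝ) 1,
      (∫ y in (0 : ℝ)..A, χ y ^ 2 * |f ((y + y ^ 2 * ζ y) / h) - f (y / h)| ^ 2)
        ≤ C * h ^ (2 * δ) := by
  obtain ⟨hδ0, hδ2⟩ := hδ
  obtain ⟨hη0, hη1⟩ := hη
  have hr1 : (-1:ℝ) < -(2*δ) := by linarith
  refine ⟨4*C₀^2 * η^(-(2*δ)) * A^(1-2*δ)/(1-2*δ), div_pos (by positivity) (by linarith), ?_⟩
  rintro h ⟨hh0, hh1⟩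
  have key : ∀ y ∈ Set.Ioc (0:ℝ) A,
      χ y ^2 * |f ((y + y^2*ζ y)/h) - f (y/h)|^2
        ≤ 4*C₀^2*η^(-(2*δ))*h^(2*δ) * y^(-(2*δ)) := by
    rintro y ⟨hy0, hyA⟩
    have hζy := hζη y ⟨hy0.le, hyA⟩
    set t : ℝ := η*y/h with ht
    have ht0 : 0 < t := by positivity
    have hbd : ∀ x : ℝ, t ≤ x → |f x| ≤ C₀ * (1+t)^(-δ) := by
      intro x hx
      refine (hfb x).trans (mul_le_mul_of_nonneg_left ?_ hC₀.le)
      refine Real.rpow_le_rpow_of_nonpos (by positivity) ?_ (by linarith)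
      have : t ≤ |x| := hx.trans (le_abs_self x)
      linarith
    have ha : t ≤ (y + y^2*ζ y)/h := (div_le_div_iff_of_pos_right hh0).mpr (by nlinarith)
    have hb : t ≤ y/h := (div_le_div_iff_of_pos_right hh0).mpr (by nlinarith)
    have habs : |f ((y + y^2*ζ y)/h) - f (y/h)| ≤ 2*C₀*(1+t)^(-δ) := by
      calc |f ((y + y^2*ζ y)/h) - f (y/h)|
          ≤ |f ((y + y^2*ζ y)/h)| + |f (y/h)| := abs_sub _ _
        _ ≤ C₀*(1+t)^(-δ) + C₀*(1+t)^(-δ) := add_le_add (hbd _ ha) (hbd _ hb)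
        _ = 2*C₀*(1+t)^(-δ) := by ring
    have hsq : |f ((y + y^2*ζ y)/h) - f (y/h)|^2 ≤ 4*C₀^2*(1+t)^(-(2*δ)) := by
      have := pow_le_pow_left₀ (abs_nonneg _) habs 2
      calc |f ((y + y^2*ζ y)/h) - f (y/h)|^2 ≤ (2*C₀*(1+t)^(-δ))^2 := this
        _ = 4*C₀^2*((1+t)^(-δ))^2 := by ring
        _ = 4*C₀^2*(1+t)^(-(2*δ)) := by
            have hp2 : ((1+t)^(-δ))^2 = (1+t)^(-(2*δ)) := by
              rw [← Real.rpow_natCast ((1+t)^(-δ)) 2, ← Real.rpow_mul (by positivity)]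
              congr 1
              push_cast
              ring
            rw [hp2]
    have ht2 : (1+t)^(-(2*δ)) ≤ t^(-(2*δ)) :=
      Real.rpow_le_rpow_of_nonpos ht0 (by linarith) (by linarith)
    have htval : t^(-(2*δ)) = η^(-(2*δ)) * y^(-(2*δ)) * h^(2*δ) := by
      rw [ht, div_eq_mul_inv, Real.mul_rpow (by positivity) (by positivity),
        Real.mul_rpow hη0.le hy0.le, Real.inv_rpow hh0.le, ← Real.rpow_neg hh0.le]
      ring_nf
    have hχy : χ y ^ 2 ≤ 1 := by
      have := hχ01 y
      nlinarith [this.1, this.2]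
    calc χ y ^2 * |f ((y + y^2*ζ y)/h) - f (y/h)|^2
        ≤ 1 * |f ((y + y^2*ζ y)/h) - f (y/h)|^2 :=
          mul_le_mul_of_nonneg_right hχy (by positivity)
      _ = |f ((y + y^2*ζ y)/h) - f (y/h)|^2 := one_mul _
      _ ≤ 4*C₀^2*(1+t)^(-(2*δ)) := hsq
      _ ≤ 4*C₀^2*(t^(-(2*δ))) := by nlinarith [ht2]
      _ = 4*C₀^2*η^(-(2*δ))*h^(2*δ) * y^(-(2*δ)) := by rw [htval]; ring
  rw [intervalIntegral.integral_of_le hA.le]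
  have hg_int : MeasureTheory.IntegrableOn
      (fun y : ℝ => 4*C₀^2*η^(-(2*δ))*h^(2*δ) * y^(-(2*δ))) (Set.Ioc 0 A) := by
    apply MeasureTheory.Integrable.const_mul
    have := intervalIntegral.intervalIntegrable_rpow' (a := 0) (b := A) hr1
    rwa [intervalIntegrable_iff, Set.uIoc_of_le hA.le] at this
  have step : (∫ y in Set.Ioc (0:ℝ) A, χ y ^ 2 * |f ((y + y ^ 2 * ζ y) / h) - f (y / h)| ^ 2)
      ≤ ∫ y in Set.Ioc (0:ℝ) A, 4*C₀^2*η^(-(2*δ))*h^(2*δ) * y^(-(2*δ)) := by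
    apply MeasureTheory.integral_mono_of_nonneg
    · filter_upwards with y using by positivity
    · exact hg_int
    · filter_upwards [MeasureTheory.ae_restrict_mem measurableSet_Ioc] with y hy
      exact key y hy
  refine step.trans ?_
  rw [← intervalIntegral.integral_of_le hA.le, intervalIntegral.integral_const_mul,
    integral_rpow (Or.inl hr1), Real.zero_rpow (by intro hc; nlinarith), sub_zero,
    show -(2*δ)+1 = 1-2*δ by ring]
  exact le_of_eq (by ring)
end

section
/- Let δ ∈ (0, 1/2), A > 0, C₀ > 0 and η ∈ (0, 1). Let f : ℝ → ℝ be twice continuously differentiable with |f(y)| ≤ C₀(1 + |y|)^(−δ), |f'(y)| ≤ C₀(1 + |y|)^(−1−δ) and |f''(y)| ≤ C₀(1 + |y|)^(−2−δ) for all y ∈ ℝ. Let χ : ℝ → [0, 1] be continuously differentiable with χ(y) = 0 for y ∉ [0, A], and let ζ : [0, A] → ℝ be continuously differentiable with 1 + y·ζ(y) ≥ η for all y ∈ [0, A]. Then there is a constant C > 0 such that for every h ∈ (0, 1]: ∫₀^A | d/dy [ χ(y)·( f((y + y²ζ(y))/h) − f(y/h) ) ] |² dy ≤ C·h^(2δ).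 -/
/-!
Write `s = y / h` and `t = η s`. Both arguments `s` and `(y + y²ζ(y)) / h = s (1 + yζ(y))` of `f`
are at least `t`, and they differ by `s · yζ(y) = O(y s)`. By the mean value theorem and the
symbol bounds on `f'` and `f''`, each factor `s` produced by differentiating the perturbation is
paid for by one extra order of decay `t⁻¹`, so the derivative is `O(t^(-δ)) = O((y / h)^(-δ))`
pointwise. Its square is then dominated by `h^(2δ) y^(-2δ)`, which is integrable on `[0, A]`
because `δ < 1 / 2`.
-/

open Set MeasureTheory Real intervalIntegral

lemma abs_le_mul_rpow_of_le {φ : ℝ → ℝ} {C r t x : ℝ} (hφ : ∀ x, |φ x| ≤ C * (1 + |x|) ^ r)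
    (hr : r ≤ 0) (ht : 0 < t) (hx : t ≤ x) : |φ x| ≤ C * t ^ r := by
  have hC : 0 ≤ C := by simpa using (abs_nonneg _).trans (hφ 0)
  refine (hφ x).trans (mul_le_mul_of_nonneg_left (rpow_le_rpow_of_nonpos ht ?_ hr) hC)
  linarith [le_abs_self x]

lemma abs_sub_le_of_abs_deriv_le_mul_rpow {g g' : ℝ → ℝ} {C r t a b : ℝ}
    (hg : ∀ x, HasDerivAt g (g' x) x) (hg' : ∀ x, |g' x| ≤ C * (1 + |x|) ^ r)
    (hr : r ≤ 0) (ht : 0 < t) (ha : t ≤ a) (hb : t ≤ b) :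
    |g b - g a| ≤ C * t ^ r * |b - a| := by
  simpa only [Real.norm_eq_abs] using (convex_Ici t).norm_image_sub_le_of_norm_hasDerivWithin_le
    (fun x _ => (hg x).hasDerivWithinAt)
    (fun x hx => abs_le_mul_rpow_of_le hg' hr ht hx) ha hb

lemma abs_comp_div_sub_comp_div_le {g g' : ℝ → ℝ} {C r η L h y u : ℝ}
    (hg : ∀ x, HasDerivAt g (g' x) x) (hg' : ∀ x, |g' x| ≤ C * (1 + |x|) ^ r) (hr : r ≤ 0)
    (hη : 0 < η) (hη1 : η ≤ 1) (hh : 0 < h) (hy : 0 < y)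
    (hu : η * y ≤ u) (hu_sub : |u - y| ≤ L * y ^ 2) :
    |g (u / h) - g (y / h)| ≤ C * L * y / η * (η * (y / h)) ^ (r + 1) := by
  have hs : 0 < y / h := by positivity
  have ht : 0 < η * (y / h) := by positivity
  have hC : 0 ≤ C := by simpa using (abs_nonneg _).trans (hg' 0)
  have hdiff : |u / h - y / h| ≤ L * y * (y / h) := by
    rw [← sub_div, abs_div, abs_of_pos hh, mul_div_assoc', mul_assoc, ← sq]
    exact div_le_div_of_nonneg_right hu_sub hh.le
  calc |g (u / h) - g (y / h)| ≤ C * (η * (y / h)) ^ r * |u / h - y / h| :=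
        abs_sub_le_of_abs_deriv_le_mul_rpow hg hg' hr ht (mul_le_of_le_one_left hs.le hη1)
          (by rw [← mul_div_assoc]; exact div_le_div_of_nonneg_right hu hh.le)
    _ ≤ C * (η * (y / h)) ^ r * (L * y * (y / h)) := by gcongr
    _ = C * L * y / η * (η * (y / h)) ^ (r + 1) := by
        rw [rpow_add_one ht.ne']; field_simp

lemma abs_perturbed_deriv_le {f f' f'' : ℝ → ℝ} {C₀ δ η K L A h y u u' a b : ℝ}
    (hf : ∀ x, HasDerivAt f (f' x) x) (hf' : ∀ x, HasDerivAt f' (f'' x) x)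
    (hf'b : ∀ x, |f' x| ≤ C₀ * (1 + |x|) ^ (-1 - δ))
    (hf''b : ∀ x, |f'' x| ≤ C₀ * (1 + |x|) ^ (-2 - δ))
    (hδ : 0 ≤ δ) (hη : 0 < η) (hη1 : η ≤ 1) (hh : 0 < h) (hy : 0 < y) (hyA : y ≤ A)
    (ha : |a| ≤ K) (hb : |b| ≤ K)
    (hu : η * y ≤ u) (hu_sub : |u - y| ≤ L * y ^ 2) (hu' : |u' - 1| ≤ L * y) :
    |a * (f (u / h) - f (y / h)) + b * (f' (u / h) * (u' / h) - f' (y / h) * (1 / h))|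
      ≤ C₀ * K * L * ((A + 1) / η + (1 + L * A) / η ^ 2) * (η * (y / h)) ^ (-δ) := by
  set s := y / h
  set t := η * s
  have ht : 0 < t := by positivity
  have hK : 0 ≤ K := (abs_nonneg a).trans ha
  have hL : 0 ≤ L := nonneg_of_mul_nonneg_left ((abs_nonneg _).trans hu') hy
  have hC₀ : 0 ≤ C₀ := by simpa using (abs_nonneg _).trans (hf'b 0)
  have hΔ₀ := abs_comp_div_sub_comp_div_le hf hf'b (by linarith) hη hη1 hh hy hu hu_sub
  have hΔ₁ := abs_comp_div_sub_comp_div_le hf' hf''b (by linarith) hη hη1 hh hy hu hu_sub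
  have hf's :=
    abs_le_mul_rpow_of_le hf'b (by linarith) ht (mul_le_of_le_one_left (by positivity) hη1)
  rw [show -1 - δ + 1 = -δ by ring] at hΔ₀
  rw [show -2 - δ + 1 = -1 - δ by ring] at hΔ₁
  have hc : |u' / h| ≤ (1 + L * A) / h := by
    rw [abs_div, abs_of_pos hh]
    gcongr
    nlinarith [abs_sub_abs_le_abs_sub u' 1, abs_one (α := ℝ)]
  have hc₁ : |u' / h - 1 / h| ≤ L * s := by
    rw [← sub_div, abs_div, abs_of_pos hh]
    simpa only [s, mul_div_assoc] using div_le_div_of_nonneg_right hu' hh.le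
  have hw : t ^ (-1 - δ) * s = t ^ (-δ) / η := by
    rw [show -1 - δ = -δ - 1 by ring, rpow_sub_one ht.ne']; field_simp; ring
  calc _ ≤ |a| * |f (u / h) - f s|
          + |b| * (|f' (u / h) - f' s| * |u' / h| + |f' s| * |u' / h - 1 / h|) := by
        rw [show f' (u / h) * (u' / h) - f' s * (1 / h)
            = (f' (u / h) - f' s) * (u' / h) + f' s * (u' / h - 1 / h) by ring]
        refine (abs_add_le _ _).trans ?_
        rw [abs_mul, abs_mul b]
        gcongr
        exact (abs_add_le _ _).trans_eq (by rw [abs_mul, abs_mul])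
    _ ≤ K * (C₀ * L * y / η * t ^ (-δ)) + K * (C₀ * L * y / η * t ^ (-1 - δ) * ((1 + L * A) / h)
          + C₀ * t ^ (-1 - δ) * (L * s)) := by
        gcongr
    _ = C₀ * K * L * (y / η * t ^ (-δ) + (1 + (1 + L * A) / η) * (t ^ (-1 - δ) * s)) := by
        simp only [s]; field_simp; ring
    _ = C₀ * K * L * ((y + 1) / η + (1 + L * A) / η ^ 2) * t ^ (-δ) := by
        rw [hw]; field_simp; ring
    _ ≤ C₀ * K * L * ((A + 1) / η + (1 + L * A) / η ^ 2) * t ^ (-δ) := by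
        gcongr

lemma hasDerivWithinAt_mul_comp_sub_comp {f f' χ ζ : ℝ → ℝ} {s : Set ℝ} {h y χ' ζ' : ℝ}
    (hf : ∀ x, HasDerivAt f (f' x) x) (hχ : HasDerivAt χ χ' y)
    (hζ : HasDerivWithinAt ζ ζ' s y) :
    HasDerivWithinAt (fun y => χ y * (f ((y + y ^ 2 * ζ y) / h) - f (y / h)))
      (χ' * (f ((y + y ^ 2 * ζ y) / h) - f (y / h)) +
        χ y * (f' ((y + y ^ 2 * ζ y) / h) * ((1 + 2 * y * ζ y + y ^ 2 * ζ') / h)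
          - f' (y / h) * (1 / h))) s y := by
  have hu : HasDerivWithinAt (fun y => (y + y ^ 2 * ζ y) / h)
      ((1 + 2 * y * ζ y + y ^ 2 * ζ') / h) s y := by
    refine (((hasDerivAt_id' y).hasDerivWithinAt.fun_add
      ((hasDerivWithinAt_pow 2 y).fun_mul hζ)).div_const h).congr_deriv ?_
    norm_num [add_assoc]
  exact hχ.hasDerivWithinAt.mul (((hf _).comp_hasDerivWithinAt y hu).sub
    ((hf _).comp_hasDerivWithinAt y ((hasDerivWithinAt_id y s).div_const h)))

lemma quadratic_perturbation_bounds {A K y z z' : ℝ} (hy : y ∈ Icc 0 A) (hz : |z| ≤ K)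
    (hz' : |z'| ≤ K) :
    |y + y ^ 2 * z - y| ≤ (2 + A) * K * y ^ 2 ∧
      |1 + 2 * y * z + y ^ 2 * z' - 1| ≤ (2 + A) * K * y := by
  obtain ⟨hy0, hyA⟩ := hy
  have hK : 0 ≤ K := (abs_nonneg z).trans hz
  constructor
  · rw [add_sub_cancel_left, abs_mul, abs_of_nonneg (sq_nonneg y)]
    nlinarith [mul_le_mul_of_nonneg_left hz (sq_nonneg y),
      mul_nonneg (mul_nonneg hK (sq_nonneg y)) (by linarith : 0 ≤ 1 + A)]
  · calc |1 + 2 * y * z + y ^ 2 * z' - 1| ≤ |2 * y * z| + |y ^ 2 * z'| := by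
          rw [add_assoc, add_sub_cancel_left]; exact abs_add_le _ _
      _ = 2 * y * |z| + y * (y * |z'|) := by
          rw [abs_mul, abs_mul, abs_mul, abs_two, abs_of_nonneg hy0, abs_of_nonneg (sq_nonneg y)]
          ring
      _ ≤ 2 * y * K + y * (A * K) := by gcongr; linarith
      _ = (2 + A) * K * y := by ring

lemma integral_sq_le_of_abs_le_mul_rpow_div {g : ℝ → ℝ} {A B δ h : ℝ} (hA : 0 ≤ A) (hh : 0 < h)
    (hδ : δ < 1 / 2) (hg : ContinuousOn g (Icc 0 A))
    (hgB : ∀ y ∈ Ioc 0 A, |g y| ≤ B * (y / h) ^ (-δ)) :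
    ∫ y in 0..A, |g y| ^ 2 ≤ B ^ 2 * A ^ (1 - 2 * δ) / (1 - 2 * δ) * h ^ (2 * δ) := by
  have hint : IntervalIntegrable (fun y => B ^ 2 * h ^ (2 * δ) * y ^ (-(2 * δ))) volume 0 A :=
    (intervalIntegrable_rpow' (by linarith)).const_mul _
  calc ∫ y in 0..A, |g y| ^ 2 ≤ ∫ y in 0..A, B ^ 2 * h ^ (2 * δ) * y ^ (-(2 * δ)) := by
        refine integral_mono_ae_restrict hA ((hg.abs.pow 2).intervalIntegrable_of_Icc hA) hint ?_
        rw [← Measure.restrict_congr_set Ioc_ae_eq_Icc]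
        refine ae_restrict_of_forall_mem measurableSet_Ioc fun y hy => ?_
        calc |g y| ^ 2 ≤ (B * (y / h) ^ (-δ)) ^ 2 := pow_le_pow_left₀ (abs_nonneg _) (hgB y hy) 2
          _ = B ^ 2 * (y / h) ^ (-(2 * δ)) := by
            rw [mul_pow, ← rpow_mul_natCast (div_nonneg hy.1.le hh.le)]
            congr 2; push_cast; ring
          _ = B ^ 2 * h ^ (2 * δ) * y ^ (-(2 * δ)) := by
            rw [div_rpow hy.1.le hh.le, rpow_neg hh.le (2 * δ), div_inv_eq_mul]; ring
    _ = B ^ 2 * A ^ (1 - 2 * δ) / (1 - 2 * δ) * h ^ (2 * δ) := by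
        rw [intervalIntegral.integral_const_mul, integral_rpow (Or.inl (by linarith)),
          show -(2 * δ) + 1 = 1 - 2 * δ by ring, zero_rpow (by linarith)]
        ring

lemma IsCompact.exists_pos_bound_abs_of_continuousOn₄ {X : Type*} [TopologicalSpace X]
    {s : Set X} (hs : IsCompact s) {φ₁ φ₂ φ₃ φ₄ : X → ℝ} (h₁ : ContinuousOn φ₁ s)
    (h₂ : ContinuousOn φ₂ s) (h₃ : ContinuousOn φ₃ s) (h₄ : ContinuousOn φ₄ s) :
    ∃ K > 0, ∀ x ∈ s, |φ₁ x| ≤ K ∧ |φ₂ x| ≤ K ∧ |φ₃ x| ≤ K ∧ |φ₄ x| ≤ K := by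
  obtain ⟨K₀, hK₀⟩ := hs.exists_bound_of_continuousOn
    (show ContinuousOn (fun x => |φ₁ x| + |φ₂ x| + |φ₃ x| + |φ₄ x|) s by fun_prop)
  refine ⟨max K₀ 1, by positivity, fun x hx => ?_⟩
  have := (le_abs_self _).trans ((hK₀ x hx).trans (le_max_left K₀ 1))
  refine ⟨?_, ?_, ?_, ?_⟩ <;>
    linarith [abs_nonneg (φ₁ x), abs_nonneg (φ₂ x), abs_nonneg (φ₃ x), abs_nonneg (φ₄ x)]

theorem approximation_lemma_H1_general (δ A C₀ η : ℝ)
    (hδ : δ ∈ Set.Ioo (0 : ℝ) (1 / 2)) (hA : 0 < A) (hC₀ : 0 < C₀)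
    (hη : η ∈ Set.Ioo (0 : ℝ) 1)
    (f f' f'' : ℝ → ℝ)
    (hf : ∀ y : ℝ, HasDerivAt f (f' y) y)
    (hf' : ∀ y : ℝ, HasDerivAt f' (f'' y) y)
    (hf'b : ∀ y : ℝ, |f' y| ≤ C₀ * (1 + |y|) ^ (-1 - δ))
    (hf''b : ∀ y : ℝ, |f'' y| ≤ C₀ * (1 + |y|) ^ (-2 - δ))
    (χ χ' : ℝ → ℝ)
    (hχ : ∀ y : ℝ, HasDerivAt χ (χ' y) y) (hχ'cont : Continuous χ')
    (ζ ζ' : ℝ → ℝ)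
    (hζ : ∀ y ∈ Set.Icc (0 : ℝ) A, HasDerivWithinAt ζ (ζ' y) (Set.Icc 0 A) y)
    (hζ'cont : ContinuousOn ζ' (Set.Icc 0 A))
    (hζη : ∀ y ∈ Set.Icc (0 : ℝ) A, η ≤ 1 + y * ζ y) :
    ∃ C : ℝ, 0 < C ∧ ∀ h ∈ Set.Ioc (0 : ℝ) 1,
      (∫ y in (0 : ℝ)..A,
        |derivWithin (fun y => χ y * (f ((y + y ^ 2 * ζ y) / h) - f (y / h)))
            (Set.Icc 0 A) y| ^ 2)
        ≤ C * h ^ (2 * δ) := by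
  have hfc : Continuous f := Differentiable.continuous fun x => (hf x).differentiableAt
  have hf'c : Continuous f' := Differentiable.continuous fun x => (hf' x).differentiableAt
  have hχc : Continuous χ := Differentiable.continuous fun x => (hχ x).differentiableAt
  have hζc : ContinuousOn ζ (Icc 0 A) := fun y hy => (hζ y hy).continuousWithinAt
  obtain ⟨K, hK0, hK⟩ := isCompact_Icc.exists_pos_bound_abs_of_continuousOn₄
    hχc.continuousOn hχ'cont.continuousOn hζc hζ'cont
  have h2δ : 0 < 1 - 2 * δ := by linarith [hδ.2]
  have hη0 := hη.1
  refine ⟨(C₀ * K * ((2 + A) * K) * ((A + 1) / η + (1 + (2 + A) * K * A) / η ^ 2) * η ^ (-δ)) ^ 2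
    * A ^ (1 - 2 * δ) / (1 - 2 * δ), by positivity, fun h hh => ?_⟩
  have hD := fun y (hy : y ∈ Icc 0 A) => (hasDerivWithinAt_mul_comp_sub_comp (h := h) hf (hχ y)
    (hζ y hy)).derivWithin (uniqueDiffOn_Icc hA y hy)
  refine integral_sq_le_of_abs_le_mul_rpow_div hA.le hh.1 hδ.2 (.congr (by fun_prop) hD)
    fun y hy => ?_
  have hy' := Ioc_subset_Icc_self hy
  obtain ⟨hχy, hχ'y, hζy, hζ'y⟩ := hK y hy'
  obtain ⟨hu, hu'⟩ := quadratic_perturbation_bounds hy' hζy hζ'y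
  rw [hD y hy']
  refine (abs_perturbed_deriv_le hf hf' hf'b hf''b hδ.1.le hη0 hη.2.le hh.1 hy.1 hy.2 hχ'y hχy
    (by nlinarith [hζη y hy', hy.1]) hu hu').trans_eq ?_
  rw [mul_rpow hη0.le (div_nonneg hy.1.le hh.1.le)]
  ring

/-- Derivative (Ḣ¹) part of the approximation lemma: for `f ∈ S^{−δ}` (with two
derivatives), a `C¹` cut-off `χ` supported in `[0, A]`, and a `C¹` perturbation `ζ`
with `1 + yζ(y) ≥ η > 0` on `[0, A]`, one has
`∫₀^A |d/dy (χ(y)·(f((y + y²ζ(y))/h) − f(y/h)))|² dy ≤ C·h^(2δ)` uniformly in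
`h ∈ (0, 1]`. -/
theorem approximation_lemma_H1 (δ A C₀ η : ℝ)
    (hδ : δ ∈ Set.Ioo (0 : ℝ) (1 / 2)) (hA : 0 < A) (hC₀ : 0 < C₀)
    (hη : η ∈ Set.Ioo (0 : ℝ) 1)
    (f f' f'' : ℝ → ℝ)
    (hf : ∀ y : ℝ, HasDerivAt f (f' y) y)
    (hf' : ∀ y : ℝ, HasDerivAt f' (f'' y) y)
    (hf''cont : Continuous f'')
    (hfb : ∀ y : ℝ, |f y| ≤ C₀ * (1 + |y|) ^ (-δ))
    (hf'b : ∀ y : ℝ, |f' y| ≤ C₀ * (1 + |y|) ^ (-1 - δ))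
    (hf''b : ∀ y : ℝ, |f'' y| ≤ C₀ * (1 + |y|) ^ (-2 - δ))
    (χ χ' : ℝ → ℝ)
    (hχ : ∀ y : ℝ, HasDerivAt χ (χ' y) y) (hχ'cont : Continuous χ')
    (hχ01 : ∀ y : ℝ, χ y ∈ Set.Icc (0 : ℝ) 1)
    (hχsupp : ∀ y : ℝ, y ∉ Set.Icc (0 : ℝ) A → χ y = 0)
    (ζ ζ' : ℝ → ℝ)
    (hζ : ∀ y ∈ Set.Icc (0 : ℝ) A, HasDerivWithinAt ζ (ζ' y) (Set.Icc 0 A) y)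
    (hζ'cont : ContinuousOn ζ' (Set.Icc 0 A))
    (hζη : ∀ y ∈ Set.Icc (0 : ℝ) A, η ≤ 1 + y * ζ y) :
    ∃ C : ℝ, 0 < C ∧ ∀ h ∈ Set.Ioc (0 : ℝ) 1,
      (∫ y in (0 : ℝ)..A,
        |derivWithin (fun y => χ y * (f ((y + y ^ 2 * ζ y) / h) - f (y / h)))
            (Set.Icc 0 A) y| ^ 2)
        ≤ C * h ^ (2 * δ) :=
  approximation_lemma_H1_general δ A C₀ η hδ hA hC₀ hη f f' f'' hf hf' hf'b hf''b χ χ' hχ hχ'cont ζ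
    ζ' hζ hζ'cont hζη
end

section
/- Let δ ∈ (0, 1/2), A > 0, C₀ > 0 and η ∈ (0, 1). Let f : ℝ → ℝ satisfy |f(y)| ≤ C₀(1 + |y|)^(−δ) for all y ∈ ℝ. Let χ : ℝ → [0, 1] be measurable with χ(y) = 0 for y ∉ [0, A], and let ζ : [0, A] → ℝ be continuous with 1 + y·ζ(y) ≥ η for all y ∈ [0, A]. Then there is a constant C > 0 such that for every h ∈ (0, 1]: ∫₀^A | χ(y)·f((y + y²ζ(y))/h) |^(3/2) dy ≤ C·h^(3δ/2). -/
open MeasureTheory Set intervalIntegral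

/-- L^(3/2) part of the approximation lemma: for `f` with symbol decay of order `δ`,
a cut-off `χ` supported in `[0, A]`, and a perturbation `ζ` with `1 + yζ(y) ≥ η > 0`
on `[0, A]`, one has `∫₀^A |χ(y)·f((y + y²ζ(y))/h)|^(3/2) dy ≤ C·h^(3δ/2)` uniformly
in `h ∈ (0, 1]`. -/
theorem approximation_lemma_L32 (δ A C₀ η : ℝ)
    (hδ : δ ∈ Set.Ioo (0 : ℝ) (1 / 2)) (hA : 0 < A) (hC₀ : 0 < C₀)
    (hη : η ∈ Set.Ioo (0 : ℝ) 1)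
    (f : ℝ → ℝ) (hfmeas : Measurable f)
    (hfb : ∀ y : ℝ, |f y| ≤ C₀ * (1 + |y|) ^ (-δ))
    (χ : ℝ → ℝ) (hχmeas : Measurable χ)
    (hχ01 : ∀ y : ℝ, χ y ∈ Set.Icc (0 : ℝ) 1)
    (hχsupp : ∀ y : ℝ, y ∉ Set.Icc (0 : ℝ) A → χ y = 0)
    (ζ : ℝ → ℝ) (hζcont : ContinuousOn ζ (Set.Icc 0 A))
    (hζη : ∀ y ∈ Set.Icc (0 : ℝ) A, η ≤ 1 + y * ζ y) :
    ∃ C : ℝ, 0 < C ∧ ∀ h ∈ Set.Ioc (0 : ℝ) 1,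
      (∫ y in (0 : ℝ)..A, |χ y * f ((y + y ^ 2 * ζ y) / h)| ^ ((3 : ℝ) / 2))
        ≤ C * h ^ (3 * δ / 2) := by
  obtain ⟨hδ0, hδ1⟩ := hδ
  obtain ⟨hη0, hη1⟩ := hη
  set p : ℝ := 3 * δ / 2 with hp
  have hp0 : 0 < p := by positivity
  have hp1 : p < 1 := by rw [hp]; linarith
  have hC32 : (0:ℝ) < C₀ ^ ((3:ℝ)/2) := Real.rpow_pos_of_pos hC₀ _
  have hηp : (0:ℝ) < η ^ (-p) := Real.rpow_pos_of_pos hη0 _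
  have h1p : (0:ℝ) < 1 - p := by linarith
  refine ⟨C₀ ^ ((3:ℝ)/2) * η ^ (-p) * (A ^ (1 - p) / (1 - p)),
    mul_pos (mul_pos hC32 hηp) (div_pos (Real.rpow_pos_of_pos hA _) h1p), ?_⟩
  rintro h ⟨hh0, hh1⟩
  set F : ℝ → ℝ := fun y => |χ y * f ((y + y ^ 2 * ζ y) / h)| ^ ((3:ℝ)/2) with hFdef
  set G : ℝ → ℝ := fun y => C₀ ^ ((3:ℝ)/2) * η ^ (-p) * h ^ p * y ^ (-p) with hGdef
  have hFnonneg : ∀ y, 0 ≤ F y := fun y => Real.rpow_nonneg (abs_nonneg _) _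
  -- pointwise bound on Ioc 0 A
  have key : ∀ y ∈ Ioc (0:ℝ) A, F y ≤ G y := by
    intro y hy
    obtain ⟨hy0, hyA⟩ := hy
    have hyIcc : y ∈ Icc (0:ℝ) A := ⟨hy0.le, hyA⟩
    set z := (y + y ^ 2 * ζ y) / h with hzdef
    have hlow : η * y / h ≤ z := by
      have hb : η * y ≤ y + y ^ 2 * ζ y := by
        have := hζη y hyIcc
        nlinarith
      exact (div_le_div_iff_of_pos_right hh0).mpr hb
    have hzpos : 0 < η * y / h := by positivity
    have h1z : η * y / h ≤ 1 + |z| := by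
      have hz0 : (0:ℝ) ≤ z := hzpos.le.trans hlow
      rw [abs_of_nonneg hz0]; linarith
    have step1 : F y ≤ |f z| ^ ((3:ℝ)/2) := by
      apply Real.rpow_le_rpow (abs_nonneg _) ?_ (by norm_num)
      rw [abs_mul]
      calc |χ y| * |f z| ≤ 1 * |f z| := by
            apply mul_le_mul_of_nonneg_right ?_ (abs_nonneg _)
            rw [abs_of_nonneg (hχ01 y).1]; exact (hχ01 y).2
        _ = |f z| := one_mul _
    have step2 : |f z| ^ ((3:ℝ)/2) ≤ (C₀ * (1 + |z|) ^ (-δ)) ^ ((3:ℝ)/2) :=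
      Real.rpow_le_rpow (abs_nonneg _) (hfb z) (by norm_num)
    have step3 : (C₀ * (1 + |z|) ^ (-δ)) ^ ((3:ℝ)/2)
        = C₀ ^ ((3:ℝ)/2) * (1 + |z|) ^ (-p) := by
      rw [Real.mul_rpow hC₀.le (Real.rpow_nonneg (by positivity) _),
        ← Real.rpow_mul (by positivity)]
      congr 1
      rw [hp]; ring
    have step4 : (1 + |z|) ^ (-p) ≤ (η * y / h) ^ (-p) :=
      Real.rpow_le_rpow_of_nonpos hzpos h1z (neg_nonpos.mpr hp0.le)
    have step5 : (η * y / h) ^ (-p) = η ^ (-p) * y ^ (-p) * h ^ p := by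
      rw [Real.div_rpow (by positivity) hh0.le, Real.mul_rpow hη0.le hy0.le,
        Real.rpow_neg hh0.le p, div_inv_eq_mul]
    have : F y ≤ C₀ ^ ((3:ℝ)/2) * (η ^ (-p) * y ^ (-p) * h ^ p) := by
      calc F y ≤ (C₀ * (1 + |z|) ^ (-δ)) ^ ((3:ℝ)/2) := step1.trans step2
        _ = C₀ ^ ((3:ℝ)/2) * (1 + |z|) ^ (-p) := step3
        _ ≤ C₀ ^ ((3:ℝ)/2) * (η * y / h) ^ (-p) := by
            exact mul_le_mul_of_nonneg_left step4 hC32.le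
        _ = C₀ ^ ((3:ℝ)/2) * (η ^ (-p) * y ^ (-p) * h ^ p) := by rw [step5]
    calc F y ≤ C₀ ^ ((3:ℝ)/2) * (η ^ (-p) * y ^ (-p) * h ^ p) := this
      _ = G y := by rw [hGdef]; ring
  -- integrability
  have hGint : IntervalIntegrable G volume 0 A := by
    have := (intervalIntegral.intervalIntegrable_rpow' (a := 0) (b := A)
      (r := -p) (by linarith)).const_mul (C₀ ^ ((3:ℝ)/2) * η ^ (-p) * h ^ p)
    simpa [hGdef, mul_assoc] using this
  have hζae : AEMeasurable ζ (volume.restrict (Ioc 0 A)) :=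
    (hζcont.aemeasurable measurableSet_Icc).mono_measure
      (Measure.restrict_mono Ioc_subset_Icc_self le_rfl)
  have harg : AEMeasurable (fun y : ℝ => (y + y ^ 2 * ζ y) / h)
      (volume.restrict (Ioc 0 A)) :=
    (aemeasurable_id'.add ((aemeasurable_id'.pow_const 2).mul hζae)).div_const h
  have hFae : AEStronglyMeasurable F (volume.restrict (Ioc 0 A)) := by
    have h1 : AEMeasurable (fun y => χ y * f ((y + y ^ 2 * ζ y) / h))
        (volume.restrict (Ioc 0 A)) :=
      hχmeas.aemeasurable.mul (hfmeas.comp_aemeasurable harg)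
    exact ((Real.continuous_rpow_const (by norm_num : (0:ℝ) ≤ 3/2)).measurable.comp_aemeasurable
      (continuous_abs.measurable.comp_aemeasurable h1)).aestronglyMeasurable
  have hFint : IntervalIntegrable F volume 0 A := by
    rw [intervalIntegrable_iff_integrableOn_Ioc_of_le hA.le] at hGint ⊢
    refine MeasureTheory.Integrable.mono hGint hFae ?_
    filter_upwards [ae_restrict_mem measurableSet_Ioc] with y hy
    have hGy : 0 ≤ G y := by
      have : (0:ℝ) ≤ y ^ (-p) := Real.rpow_nonneg hy.1.le _
      rw [hGdef]; positivity
    rw [Real.norm_eq_abs, Real.norm_eq_abs, abs_of_nonneg (hFnonneg y),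
      abs_of_nonneg hGy]
    exact key y hy
  -- a.e. bound on Icc
  have h0ae : ∀ᵐ y : ℝ, y ≠ 0 := by
    rw [ae_iff]
    have : {y : ℝ | ¬ y ≠ 0} = {0} := by ext y; simp
    rw [this]; exact Real.volume_singleton
  have haeIcc : F ≤ᵐ[volume.restrict (Icc 0 A)] G := by
    filter_upwards [ae_restrict_mem measurableSet_Icc, ae_restrict_of_ae h0ae]
      with y hy hy0
    exact key y ⟨lt_of_le_of_ne hy.1 (Ne.symm hy0), hy.2⟩
  -- conclude
  have hmono : (∫ y in (0:ℝ)..A, F y) ≤ ∫ y in (0:ℝ)..A, G y :=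
    intervalIntegral.integral_mono_ae_restrict hA.le hFint hGint haeIcc
  have hGval : (∫ y in (0:ℝ)..A, G y)
      = C₀ ^ ((3:ℝ)/2) * η ^ (-p) * (A ^ (1 - p) / (1 - p)) * h ^ p := by
    rw [hGdef]
    rw [intervalIntegral.integral_const_mul]
    rw [integral_rpow (Or.inl (by linarith : (-1:ℝ) < -p))]
    rw [Real.zero_rpow (by linarith : -p + 1 ≠ 0)]
    have hone : -p + 1 = 1 - p := by ring
    rw [hone]
    ring
  calc (∫ y in (0:ℝ)..A, F y) ≤ ∫ y in (0:ℝ)..A, G y := hmono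
    _ = C₀ ^ ((3:ℝ)/2) * η ^ (-p) * (A ^ (1 - p) / (1 - p)) * h ^ p := hGval
    _ = C₀ ^ ((3:ℝ)/2) * η ^ (-p) * (A ^ (1 - p) / (1 - p)) * h ^ (3 * δ / 2) := by
        rw [hp]
end

section
/- Let δ ∈ (0, 1/2) and C₀ > 0. Let χ₀ : ℝ → ℝ be bounded, measurable and compactly supported, let ρ : ℝ → ℝ be bounded and measurable, and let f : ℝ → ℝ satisfy |f(x)| ≤ C₀(1 + |x|)^(−δ) for all x ∈ ℝ. Then there is a constant C > 0 such that for every ℓ ≥ 1 and every h ∈ (0, 1]: ∫_ℝ | χ₀(x)·ρ(x/(ℓh))·f(x/h) |² dx ≤ C·h^δ. -/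
open MeasureTheory Set Real

private lemma abs_rpow_integrableOn_Icc {r R : ℝ} (hr : -1 < r) (hR : 0 < R) :
    IntegrableOn (fun x : ℝ => |x| ^ r) (Icc (-R) R) := by
  have hpos : IntegrableOn (fun x : ℝ => |x| ^ r) (Ioc 0 R) := by
    have h1 : IntervalIntegrable (fun x : ℝ => x ^ r) volume 0 R :=
      intervalIntegral.intervalIntegrable_rpow' hr
    rw [intervalIntegrable_iff_integrableOn_Ioc_of_le hR.le] at h1
    exact h1.congr_fun (fun x hx => by rw [abs_of_pos hx.1]) measurableSet_Ioc
  have hposIcc : IntegrableOn (fun x : ℝ => |x| ^ r) (Icc 0 R) :=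
    (integrableOn_Icc_iff_integrableOn_Ioc).2 hpos
  have hneg : IntegrableOn (fun x : ℝ => |x| ^ r) (Ico (-R) 0) := by
    have m : MeasurableEmbedding fun x : ℝ => -x :=
      (Homeomorph.neg ℝ).measurableEmbedding
    have : IntegrableOn (fun x : ℝ => |x| ^ r) (Ico (-R) 0)
        (Measure.map (fun x : ℝ => -x) volume) := by
      rw [m.integrableOn_map_iff]
      have hpre : (fun x : ℝ => -x) ⁻¹' Ico (-R) 0 = Ioc 0 R := by
        ext x; simp [neg_le, and_comm, neg_lt, lt_neg]
      rw [hpre]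
      exact hpos.congr_fun (fun x _ => by simp [Function.comp]) measurableSet_Ioc
    rwa [Measure.map_neg_eq_self] at this
  have hunion := hneg.union hposIcc
  exact hunion.mono_set (by
    intro x hx
    rcases lt_or_ge x 0 with h | h
    · exact Or.inl ⟨hx.1, h⟩
    · exact Or.inr ⟨h, hx.2⟩)

/-- L² estimate for the two-parameter family `F_{ℓ,h}(x) = χ₀(x)·ρ(x/(ℓh))·f(x/h)`:
for `χ₀` bounded, measurable and compactly supported, `ρ` bounded and measurable, and
`f` with polynomial decay of order `δ`, one has
`∫ℝ |χ₀(x)·ρ(x/(ℓh))·f(x/h)|² dx ≤ C·h^δ` uniformly in `ℓ ≥ 1` and `h ∈ (0, 1]`. -/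
theorem cutoff_family_L2 (δ C₀ : ℝ)
    (hδ : δ ∈ Set.Ioo (0 : ℝ) (1 / 2)) (hC₀ : 0 < C₀)
    (χ₀ : ℝ → ℝ) (hχ₀meas : Measurable χ₀) (hχ₀supp : HasCompactSupport χ₀)
    (hχ₀bdd : ∃ B : ℝ, ∀ x : ℝ, |χ₀ x| ≤ B)
    (ρ : ℝ → ℝ) (hρmeas : Measurable ρ) (hρbdd : ∃ B : ℝ, ∀ x : ℝ, |ρ x| ≤ B)
    (f : ℝ → ℝ) (hfmeas : Measurable f)
    (hfb : ∀ x : ℝ, |f x| ≤ C₀ * (1 + |x|) ^ (-δ)) :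
    ∃ C : ℝ, 0 < C ∧ ∀ ℓ : ℝ, 1 ≤ ℓ → ∀ h ∈ Set.Ioc (0 : ℝ) 1,
      (∫ x : ℝ, |χ₀ x * ρ (x / (ℓ * h)) * f (x / h)| ^ 2) ≤ C * h ^ δ := by
  obtain ⟨hδ0, hδ2⟩ := hδ
  obtain ⟨B₁, hB₁⟩ := hχ₀bdd
  obtain ⟨B₂, hB₂⟩ := hρbdd
  have hB₁0 : 0 ≤ B₁ := le_trans (abs_nonneg _) (hB₁ 0)
  have hB₂0 : 0 ≤ B₂ := le_trans (abs_nonneg _) (hB₂ 0)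
  -- support radius
  obtain ⟨R₀, hR₀⟩ := (hχ₀supp.isBounded).subset_closedBall 0
  set R : ℝ := max R₀ 1 with hRdef
  have hR : 0 < R := lt_of_lt_of_le one_pos (le_max_right _ _)
  have hsupp : tsupport χ₀ ⊆ Icc (-R) R := by
    intro x hx
    have := hR₀ hx
    rw [Metric.mem_closedBall, Real.dist_eq, sub_zero] at this
    have hxR : |x| ≤ R := le_trans this (le_max_left _ _)
    exact abs_le.1 hxR
  set r : ℝ := -(2 * δ) with hrdef
  have hr : -1 < r := by rw [hrdef]; linarith
  have hr0 : r ≤ 0 := by rw [hrdef]; linarith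
  have hInt : IntegrableOn (fun x : ℝ => |x| ^ r) (Icc (-R) R) :=
    abs_rpow_integrableOn_Icc hr hR
  set M : ℝ := B₁ ^ 2 * B₂ ^ 2 * C₀ ^ 2 with hMdef
  have hM0 : 0 ≤ M := by positivity
  set I : ℝ := ∫ x in Icc (-R) R, |x| ^ r with hIdef
  have hI0 : 0 ≤ I :=
    setIntegral_nonneg measurableSet_Icc (fun x _ => rpow_nonneg (abs_nonneg x) r)
  refine ⟨M * I + 1, by positivity, fun ℓ hℓ h hh => ?_⟩
  obtain ⟨hh0, hh1⟩ := hh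
  set g : ℝ → ℝ := fun x =>
    M * h ^ (2 * δ) * Set.indicator (Icc (-R) R) (fun x => |x| ^ r) x with hgdef
  have hgint : Integrable g :=
    (hInt.integrable_indicator measurableSet_Icc).const_mul _
  have hae : ∀ᵐ x : ℝ, x ≠ 0 := by
    rw [ae_iff]
    simp only [ne_eq, not_not, Set.setOf_eq_eq_singleton]
    exact measure_singleton 0
  have hg0 : ∀ x, 0 ≤ g x := fun x =>
    mul_nonneg (by positivity)
      (Set.indicator_nonneg (fun y _ => rpow_nonneg (abs_nonneg y) r) x)
  have hle : ∀ᵐ x : ℝ, |χ₀ x * ρ (x / (ℓ * h)) * f (x / h)| ^ 2 ≤ g x := by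
    filter_upwards [hae] with x hx0
    by_cases hs : χ₀ x = 0
    · simp [hs, hg0 x]
    · have hxsupp : x ∈ Icc (-R) R :=
        hsupp (subset_closure (by simpa [Function.mem_support] using hs))
      have hgx : g x = M * h ^ (2 * δ) * |x| ^ r := by
        rw [hgdef]; simp [Set.indicator_of_mem hxsupp]
      have habs : |x / h| = |x| / h := by
        rw [abs_div, abs_of_pos hh0]
      have h1 : |χ₀ x * ρ (x / (ℓ * h)) * f (x / h)|
          ≤ B₁ * B₂ * (C₀ * (1 + |x / h|) ^ (-δ)) := by
        rw [abs_mul, abs_mul]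
        refine mul_le_mul (mul_le_mul (hB₁ x) (hB₂ _) (abs_nonneg _) hB₁0)
          (hfb _) (abs_nonneg _) (by positivity)
      have step1 : |χ₀ x * ρ (x / (ℓ * h)) * f (x / h)| ^ 2
          ≤ (B₁ * B₂ * (C₀ * (1 + |x / h|) ^ (-δ))) ^ 2 :=
        pow_le_pow_left₀ (abs_nonneg _) h1 2
      have step2 : (B₁ * B₂ * (C₀ * (1 + |x / h|) ^ (-δ))) ^ 2
          = M * (1 + |x / h|) ^ r := by
        have h2 : ((1 + |x / h|) ^ (-δ)) ^ (2 : ℕ) = (1 + |x / h|) ^ r := by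
          rw [← Real.rpow_natCast ((1 + |x / h|) ^ (-δ)) 2,
            ← Real.rpow_mul (by positivity)]
          congr 1
          push_cast
          rw [hrdef]; ring
        rw [hMdef, ← h2]
        ring
      have hxpos : 0 < |x| / h := div_pos (abs_pos.2 hx0) hh0
      have step3 : (1 + |x / h|) ^ r ≤ (|x| / h) ^ r := by
        rw [habs]
        exact Real.rpow_le_rpow_of_nonpos hxpos (by linarith) hr0
      have step4 : (|x| / h) ^ r = h ^ (2 * δ) * |x| ^ r := by
        rw [Real.div_rpow (abs_nonneg x) hh0.le, hrdef, Real.rpow_neg hh0.le,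
          div_eq_mul_inv, inv_inv]
        ring
      calc |χ₀ x * ρ (x / (ℓ * h)) * f (x / h)| ^ 2
          ≤ (B₁ * B₂ * (C₀ * (1 + |x / h|) ^ (-δ))) ^ 2 := step1
        _ = M * (1 + |x / h|) ^ r := step2
        _ ≤ M * ((|x| / h) ^ r) := mul_le_mul_of_nonneg_left step3 hM0
        _ = M * h ^ (2 * δ) * |x| ^ r := by rw [step4]; ring
        _ = g x := hgx.symm
  have hnn : ∀ᵐ x : ℝ, 0 ≤ |χ₀ x * ρ (x / (ℓ * h)) * f (x / h)| ^ 2 :=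
    Filter.Eventually.of_forall fun x => by positivity
  have hmain : (∫ x : ℝ, |χ₀ x * ρ (x / (ℓ * h)) * f (x / h)| ^ 2)
      ≤ ∫ x, g x := integral_mono_of_nonneg hnn hgint hle
  have hgval : (∫ x, g x) = M * h ^ (2 * δ) * I := by
    rw [hgdef, integral_const_mul, integral_indicator measurableSet_Icc]
  have hpow : h ^ (2 * δ) ≤ h ^ δ :=
    Real.rpow_le_rpow_of_exponent_ge hh0 hh1 (by linarith)
  have hfin : M * h ^ (2 * δ) * I ≤ (M * I + 1) * h ^ δ := by
    have h1 : M * h ^ (2 * δ) * I ≤ M * h ^ δ * I :=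
      mul_le_mul_of_nonneg_right (mul_le_mul_of_nonneg_left hpow hM0) hI0
    have hpδ : 0 < h ^ δ := Real.rpow_pos_of_pos hh0 δ
    nlinarith
  calc (∫ x : ℝ, |χ₀ x * ρ (x / (ℓ * h)) * f (x / h)| ^ 2)
      ≤ ∫ x, g x := hmain
    _ = M * h ^ (2 * δ) * I := hgval
    _ ≤ (M * I + 1) * h ^ δ := hfin
end

section
/- Let δ ∈ (0, 1/2) and C₀ > 0. Let χ₀ : ℝ → ℝ be twice continuously differentiable, compactly supported, and equal to 1 on a neighborhood of 0; let ρ : ℝ → ℝ be twice continuously differentiable and bounded together with its first two derivatives, with ρ equal to 0 on a neighborhood of 0 and equal to 1 outside a compact set; let f : ℝ → ℝ be twice continuously differentiable with |f(x)| ≤ C₀(1 + |x|)^(−δ), |f'(x)| ≤ C₀(1 + |x|)^(−1−δ) and |f''(x)| ≤ C₀(1 + |x|)^(−2−δ) for all x ∈ ℝ. Then there is a constant C > 0 such that for every h ∈ (0, 1] and every ℓ ≥ 1: ∫_ℝ | d²/dx² ( χ₀(h·x)·ρ(x/ℓ)·f(x) ) | dx ≤ C·( h^δ + ℓ^(−δ)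 ). -/
/-!
By the Leibniz rule, `(χ₀(h·) ρ(·/ℓ) f)''` is the sum of the terms in which a derivative falls
on `χ₀(h·)`, those in which a derivative falls on `ρ(·/ℓ)` but none on `χ₀(h·)`, and
`χ₀(h·) ρ(·/ℓ) f''`. A term of the first kind is `O(h (1 + |x|)^(-δ))` and lives on
`ε ≤ h|x| ≤ M`, where `(1 + |x|)^(-δ) ≤ (ε/h)^(-δ)`; the length `2M/h` of that region cancels
the factor `h`, leaving `O(h^δ)`. The terms of the second kind give `O(ℓ^(-δ))` in the same way
at scale `1/ℓ`, and the last term is `O((1 + |x|)^(-2-δ))` on `|x| ≥ εℓ`, hence bounded by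
`(εℓ)^(-δ) (1 + x²)⁻¹`, whose integral is `O(ℓ^(-δ))`.
-/

open MeasureTheory Filter Topology

theorem ContDiff.continuous_deriv_deriv {u : ℝ → ℝ} (hu : ContDiff ℝ 2 u) :
    Continuous (deriv (deriv u)) :=
  (hu.iterate_deriv' 0 2).continuous

theorem deriv_deriv_mul {u v : ℝ → ℝ} (hu : ContDiff ℝ 2 u) (hv : ContDiff ℝ 2 v) (x : ℝ) :
    deriv (deriv fun y => u y * v y) x =
      deriv (deriv u) x * v x + 2 * (deriv u x * deriv v x) + u x * deriv (deriv v) x := by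
  have hu1 := hu.differentiable two_ne_zero
  have hv1 := hv.differentiable two_ne_zero
  have hu2 := hu.differentiable_deriv_two
  have hv2 := hv.differentiable_deriv_two
  have hd : deriv (fun y => u y * v y) = fun y => deriv u y * v y + u y * deriv v y :=
    funext fun y => deriv_mul (hu1 y) (hv1 y)
  rw [hd, (((hu2 x).hasDerivAt.fun_mul (hv1 x).hasDerivAt).fun_add
    ((hu1 x).hasDerivAt.fun_mul (hv2 x).hasDerivAt)).deriv]
  ring

theorem deriv_deriv_comp_mul_left (u : ℝ → ℝ) (c : ℝ) :
    deriv (deriv fun y => u (c * y)) = fun y => c * (c * deriv (deriv u) (c * y)) := by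
  have hd : deriv (fun y => u (c * y)) = fun y => c * deriv u (c * y) :=
    funext fun y => deriv_comp_mul_left c u y
  rw [hd, deriv_const_mul_field']
  exact funext fun y => by rw [deriv_comp_mul_left c (deriv u) y, smul_eq_mul]

theorem derivs_eq_zero_of_eqOn_const {u : ℝ → ℝ} {U : Set ℝ} (hU : IsOpen U) {c : ℝ}
    (hu : Set.EqOn u (fun _ => c) U) {y : ℝ} (hy : y ∈ U) :
    deriv u y = 0 ∧ deriv (deriv u) y = 0 := by
  have h1 : deriv u =ᶠ[𝓝 y] fun _ => 0 := by
    filter_upwards [hU.mem_nhds hy] with z hz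
    rw [(eventuallyEq_of_mem (hU.mem_nhds hz) hu).deriv_eq, deriv_const]
  refine ⟨h1.eq_of_nhds, ?_⟩
  rw [h1.deriv_eq, deriv_const]

theorem derivs_eq_zero_of_eq_const_near_zero_and_infinity {u : ℝ → ℝ} {a b c₀ c₁ : ℝ}
    (h₀ : ∀ y, |y| < a → u y = c₀) (h₁ : ∀ y, b ≤ |y| → u y = c₁) {y : ℝ}
    (hy : |y| < a ∨ b < |y|) : deriv u y = 0 ∧ deriv (deriv u) y = 0 := by
  rcases hy with hy | hy
  · exact derivs_eq_zero_of_eqOn_const (isOpen_lt continuous_abs continuous_const) h₀ hy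
  · exact derivs_eq_zero_of_eqOn_const (isOpen_lt continuous_const continuous_abs)
      (fun z hz => h₁ z hz.le) hy

theorem HasCompactSupport.exists_bound_deriv_deriv {u : ℝ → ℝ} (hu : ContDiff ℝ 2 u)
    (hsupp : HasCompactSupport u) :
    ∃ A, ∀ y, |u y| ≤ A ∧ |deriv u y| ≤ A ∧ |deriv (deriv u) y| ≤ A := by
  obtain ⟨A₀, hA₀⟩ := hsupp.exists_bound_of_continuous hu.continuous
  obtain ⟨A₁, hA₁⟩ := hsupp.deriv.exists_bound_of_continuous (hu.continuous_deriv one_le_two)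
  obtain ⟨A₂, hA₂⟩ := hsupp.deriv.deriv.exists_bound_of_continuous hu.continuous_deriv_deriv
  refine ⟨max A₀ (max A₁ A₂), fun y => ⟨?_, ?_, ?_⟩⟩
  · exact (hA₀ y).trans (le_max_left _ _)
  · exact (hA₁ y).trans ((le_max_left _ _).trans (le_max_right _ _))
  · exact (hA₂ y).trans ((le_max_right _ _).trans (le_max_right _ _))

theorem abs_mul_le_mul_of_abs_le {a b A K : ℝ} (ha : |a| ≤ A) (hb : |b| ≤ K) :
    |a * b| ≤ A * K := by
  rw [abs_mul]
  exact mul_le_mul ha hb (abs_nonneg _) ((abs_nonneg _).trans ha)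

theorem one_add_abs_rpow_neg_le {x a δ : ℝ} (ha : 0 < a) (hδ : 0 ≤ δ) (hx : a ≤ |x|) :
    (1 + |x|) ^ (-δ) ≤ a ^ (-δ) :=
  Real.rpow_le_rpow_of_nonpos ha (by linarith [abs_nonneg x]) (neg_nonpos.mpr hδ)

theorem div_rpow_neg {a s : ℝ} (ha : 0 ≤ a) (hs : 0 ≤ s) (δ : ℝ) :
    (a / s) ^ (-δ) = a ^ (-δ) * s ^ δ := by
  rw [Real.div_rpow ha hs, Real.rpow_neg hs, div_inv_eq_mul]

theorem nonneg_of_abs_le_mul_one_add_abs_rpow {w : ℝ → ℝ} {K p : ℝ}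
    (h : ∀ x, |w x| ≤ K * (1 + |x|) ^ p) : 0 ≤ K := by
  simpa using (abs_nonneg _).trans (h 0)

theorem integral_abs_add_le {α : Type*} [MeasurableSpace α] {μ : Measure α} {u v : α → ℝ}
    (hu : Integrable u μ) (hv : Integrable v μ) :
    ∫ x, |u x + v x| ∂μ ≤ ∫ x, |u x| ∂μ + ∫ x, |v x| ∂μ := by
  rw [← integral_add hu.abs hv.abs]
  exact integral_mono (hu.add hv).abs (hu.abs.add hv.abs) fun x => abs_add_le _ _

theorem integrable_and_integral_abs_le_of_vanishing_off_annulus {w : ℝ → ℝ} {s a b K δ : ℝ}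
    (hs : 0 < s) (ha : 0 < a) (hb : 0 ≤ b) (hδ : 0 ≤ δ) (hw : Continuous w)
    (h_inner : ∀ x, |s * x| < a → w x = 0) (h_outer : ∀ x, b < |s * x| → w x = 0)
    (h_bound : ∀ x, |w x| ≤ s * K * (1 + |x|) ^ (-δ)) :
    Integrable w ∧ ∫ x, |w x| ≤ 2 * b * K * a ^ (-δ) * s ^ δ := by
  have hK : 0 ≤ s * K := nonneg_of_abs_le_mul_one_add_abs_rpow h_bound
  set I := Set.Icc (-(b / s)) (b / s)
  have h_majorant (x : ℝ) : |w x| ≤ I.indicator (fun _ => s * K * (a / s) ^ (-δ)) x := by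
    have hsx : |s * x| = s * |x| := by rw [abs_mul, abs_of_pos hs]
    by_cases h_far : b < |s * x|
    · rw [h_outer x h_far, abs_zero]
      exact Set.indicator_nonneg (fun _ _ => by positivity) x
    have hxI : x ∈ I := Set.mem_Icc.mpr <| abs_le.mp <| by
      rw [le_div_iff₀ hs, mul_comm, ← hsx]; exact not_lt.mp h_far
    rw [Set.indicator_of_mem hxI]
    by_cases h_near : |s * x| < a
    · rw [h_inner x h_near, abs_zero]; positivity
    have hax : a / s ≤ |x| := by
      rw [div_le_iff₀ hs, mul_comm, ← hsx]; exact not_lt.mp h_near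
    exact (h_bound x).trans
      (mul_le_mul_of_nonneg_left (one_add_abs_rpow_neg_le (by positivity) hδ hax) hK)
  have h_int : Integrable (I.indicator fun _ => s * K * (a / s) ^ (-δ)) :=
    (integrableOn_const measure_Icc_lt_top.ne).integrable_indicator measurableSet_Icc
  refine ⟨h_int.mono' hw.aestronglyMeasurable (Eventually.of_forall h_majorant), ?_⟩
  calc ∫ x, |w x| ≤ ∫ x, I.indicator (fun _ => s * K * (a / s) ^ (-δ)) x :=
        integral_mono_of_nonneg (Eventually.of_forall fun x => abs_nonneg _) h_int
          (Eventually.of_forall h_majorant)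
    _ = 2 * (b / s) * (s * K * (a ^ (-δ) * s ^ δ)) := by
        rw [integral_indicator_const _ measurableSet_Icc,
          Real.volume_real_Icc_of_le (neg_le_self (by positivity)), smul_eq_mul,
          div_rpow_neg ha.le hs.le]
        ring
    _ = 2 * b * K * a ^ (-δ) * s ^ δ := by field_simp

theorem integrable_and_integral_abs_le_of_vanishing_near_zero {w : ℝ → ℝ} {s a K δ : ℝ}
    (hs : 0 < s) (ha : 0 < a) (hδ : 0 ≤ δ) (hw : Continuous w)
    (h_inner : ∀ x, |s * x| < a → w x = 0)
    (h_bound : ∀ x, |w x| ≤ K * (1 + |x|) ^ (-2 - δ)) :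
    Integrable w ∧ ∫ x, |w x| ≤ Real.pi * K * a ^ (-δ) * s ^ δ := by
  have hK : 0 ≤ K := nonneg_of_abs_le_mul_one_add_abs_rpow h_bound
  have h_majorant (x : ℝ) : |w x| ≤ K * (a / s) ^ (-δ) * (1 + x ^ 2)⁻¹ := by
    by_cases h_near : |s * x| < a
    · rw [h_inner x h_near, abs_zero]; positivity
    have hax : a / s ≤ |x| := by
      rw [div_le_iff₀ hs, mul_comm, ← abs_of_pos hs, ← abs_mul]; exact not_lt.mp h_near
    have hx : 0 < 1 + |x| := by positivity
    have h_sq : (1 + |x|) ^ (-(2 : ℝ)) ≤ (1 + x ^ 2)⁻¹ := by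
      rw [Real.rpow_neg hx.le, Real.rpow_two]
      exact inv_anti₀ (by positivity) (by nlinarith [sq_abs x, abs_nonneg x])
    calc |w x| ≤ K * ((1 + |x|) ^ (-(2 : ℝ)) * (1 + |x|) ^ (-δ)) := by
          rw [← Real.rpow_add hx, ← sub_eq_add_neg]; exact h_bound x
      _ ≤ K * ((1 + x ^ 2)⁻¹ * (a / s) ^ (-δ)) := by
          gcongr ?_ * (?_ * ?_)
          exact one_add_abs_rpow_neg_le (by positivity) hδ hax
      _ = K * (a / s) ^ (-δ) * (1 + x ^ 2)⁻¹ := by ring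
  have h_int : Integrable fun x : ℝ => K * (a / s) ^ (-δ) * (1 + x ^ 2)⁻¹ :=
    integrable_inv_one_add_sq.const_mul _
  refine ⟨h_int.mono' hw.aestronglyMeasurable (Eventually.of_forall h_majorant), ?_⟩
  calc ∫ x, |w x| ≤ ∫ x, K * (a / s) ^ (-δ) * (1 + x ^ 2)⁻¹ :=
        integral_mono_of_nonneg (Eventually.of_forall fun x => abs_nonneg _) h_int
          (Eventually.of_forall h_majorant)
    _ = Real.pi * K * a ^ (-δ) * s ^ δ := by
        rw [integral_const_mul, integral_univ_inv_one_add_sq, div_rpow_neg ha.le hs.le]; ring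

/-- The part of the Leibniz expansion of `(u(s·) g)''` in which a derivative falls on `u(s·)`,
with `g₀, g₁` standing for `g, g'`. -/
noncomputable def cutoffDerivTerms (u : ℝ → ℝ) (s : ℝ) (g₀ g₁ : ℝ → ℝ) (x : ℝ) : ℝ :=
  s * (s * deriv (deriv u) (s * x)) * g₀ x + 2 * (s * deriv u (s * x) * g₁ x)

theorem deriv_deriv_cutoff_mul {χ ρ f : ℝ → ℝ} (hχ : ContDiff ℝ 2 χ) (hρ : ContDiff ℝ 2 ρ)
    (hf : ContDiff ℝ 2 f) (h c x : ℝ) :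
    deriv (deriv fun x => χ (h * x) * ρ (c * x) * f x) x =
      cutoffDerivTerms χ h (fun x => ρ (c * x) * f x)
          (fun x => c * deriv ρ (c * x) * f x + ρ (c * x) * deriv f x) x
        + cutoffDerivTerms ρ c (fun x => χ (h * x) * f x) (fun x => χ (h * x) * deriv f x) x
        + χ (h * x) * ρ (c * x) * deriv (deriv f) x := by
  have hχh : ContDiff ℝ 2 fun x => χ (h * x) := hχ.comp (contDiff_const.mul contDiff_id)
  have hρc : ContDiff ℝ 2 fun x => ρ (c * x) := hρ.comp (contDiff_const.mul contDiff_id)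
  have hρf : deriv (fun x => ρ (c * x) * f x) x
      = c * deriv ρ (c * x) * f x + ρ (c * x) * deriv f x := by
    rw [deriv_fun_mul ((hρc.differentiable two_ne_zero) x) ((hf.differentiable two_ne_zero) x),
      deriv_comp_mul_left, smul_eq_mul]
  simp_rw [mul_assoc (χ _)]
  rw [deriv_deriv_mul hχh (hρc.mul hf), deriv_deriv_mul hρc hf, hρf, deriv_deriv_comp_mul_left,
    deriv_deriv_comp_mul_left, deriv_comp_mul_left, deriv_comp_mul_left, smul_eq_mul, smul_eq_mul,
    cutoffDerivTerms, cutoffDerivTerms]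
  ring

theorem integrable_and_integral_abs_cutoffDerivTerms_le {u g₀ g₁ : ℝ → ℝ}
    {s a b A K₀ K₁ δ : ℝ} (hs : 0 < s) (hs1 : s ≤ 1) (ha : 0 < a) (hb : 0 ≤ b) (hδ : 0 ≤ δ)
    (hu : ContDiff ℝ 2 u) (hu_bound : ∀ y, |deriv u y| ≤ A ∧ |deriv (deriv u) y| ≤ A)
    (hu_flat : ∀ y, |y| < a ∨ b < |y| → deriv u y = 0 ∧ deriv (deriv u) y = 0)
    (hg₀ : Continuous g₀) (hg₁ : Continuous g₁)
    (hg₀_bound : ∀ x, |g₀ x| ≤ K₀ * (1 + |x|) ^ (-δ))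
    (hg₁_bound : ∀ x, |g₁ x| ≤ K₁ * (1 + |x|) ^ (-δ)) :
    Integrable (cutoffDerivTerms u s g₀ g₁) ∧
      ∫ x, |cutoffDerivTerms u s g₀ g₁ x| ≤ 2 * b * (A * (K₀ + 2 * K₁)) * a ^ (-δ) * s ^ δ := by
  have hA : 0 ≤ A := (abs_nonneg _).trans (hu_bound 0).1
  have hK₀ : 0 ≤ K₀ := nonneg_of_abs_le_mul_one_add_abs_rpow hg₀_bound
  have hu1 := hu.continuous_deriv one_le_two
  have hu2 := hu.continuous_deriv_deriv
  refine integrable_and_integral_abs_le_of_vanishing_off_annulus hs ha hb hδ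
    (by unfold cutoffDerivTerms; fun_prop) (fun x hx => ?_) (fun x hx => ?_) (fun x => ?_)
  · simp [cutoffDerivTerms, hu_flat _ (Or.inl hx)]
  · simp [cutoffDerivTerms, hu_flat _ (Or.inr hx)]
  set P := (1 + |x|) ^ (-δ)
  have hP : 0 ≤ P := by positivity
  calc _ ≤ s * (s * A) * (K₀ * P) + 2 * (s * A * (K₁ * P)) := by
        refine (abs_add_le _ _).trans ?_
        simp only [abs_mul, abs_two, abs_of_pos hs]
        gcongr
        exacts [(hu_bound _).2, hg₀_bound x, (hu_bound _).1, hg₁_bound x]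
    _ ≤ s * (1 * A) * (K₀ * P) + 2 * (s * A * (K₁ * P)) := by gcongr
    _ = s * (A * (K₀ + 2 * K₁)) * P := by ring

theorem integral_abs_deriv_deriv_cutoff_mul_le {χ ρ f : ℝ → ℝ} {A B C₀ δ ε₁ ε₂ M R h c : ℝ}
    (hχ : ContDiff ℝ 2 χ) (hρ : ContDiff ℝ 2 ρ) (hf : ContDiff ℝ 2 f) (hδ : 0 ≤ δ)
    (hε₁ : 0 < ε₁) (hM : 0 ≤ M) (hε₂ : 0 < ε₂) (hR : 0 ≤ R)
    (hh : 0 < h) (hh1 : h ≤ 1) (hc : 0 < c) (hc1 : c ≤ 1)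
    (hχ_bound : ∀ y, |χ y| ≤ A ∧ |deriv χ y| ≤ A ∧ |deriv (deriv χ) y| ≤ A)
    (hχ_flat : ∀ y, |y| < ε₁ ∨ M < |y| → deriv χ y = 0 ∧ deriv (deriv χ) y = 0)
    (hρ_bound : ∀ y, |ρ y| ≤ B ∧ |deriv ρ y| ≤ B ∧ |deriv (deriv ρ) y| ≤ B)
    (hρ_zero : ∀ y, |y| < ε₂ → ρ y = 0)
    (hρ_flat : ∀ y, |y| < ε₂ ∨ R < |y| → deriv ρ y = 0 ∧ deriv (deriv ρ) y = 0)
    (hf_decay : ∀ x, |f x| ≤ C₀ * (1 + |x|) ^ (-δ))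
    (hf'_decay : ∀ x, |deriv f x| ≤ C₀ * (1 + |x|) ^ (-δ))
    (hf''_decay : ∀ x, |deriv (deriv f) x| ≤ C₀ * (1 + |x|) ^ (-2 - δ)) :
    ∫ x, |deriv (deriv fun x => χ (h * x) * ρ (c * x) * f x) x|
      ≤ 2 * M * (A * (B * C₀ + 2 * (2 * B * C₀))) * ε₁ ^ (-δ) * h ^ δ
        + (2 * R * (B * (A * C₀ + 2 * (A * C₀))) + Real.pi * (A * (B * C₀))) * ε₂ ^ (-δ)
          * c ^ δ := by
  have := hχ.continuous; have := hρ.continuous; have := hf.continuous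
  have := hρ.continuous_deriv one_le_two; have := hf.continuous_deriv one_le_two
  have := hf.continuous_deriv_deriv
  have hcρ'_bound (y : ℝ) : |c * deriv ρ y| ≤ B := by
    rw [abs_mul, abs_of_pos hc]
    nlinarith [(hρ_bound y).2.1, abs_nonneg (deriv ρ y)]
  obtain ⟨hi₁, hI₁⟩ := integrable_and_integral_abs_cutoffDerivTerms_le
    (g₀ := fun x => ρ (c * x) * f x)
    (g₁ := fun x => c * deriv ρ (c * x) * f x + ρ (c * x) * deriv f x) (K₁ := 2 * B * C₀)
    hh hh1 hε₁ hM hδ hχ (fun y => (hχ_bound y).2) hχ_flat (by fun_prop) (by fun_prop)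
    (fun x => by rw [mul_assoc]; exact abs_mul_le_mul_of_abs_le (hρ_bound _).1 (hf_decay x))
    (fun x => by
      have := abs_mul_le_mul_of_abs_le (hcρ'_bound (c * x)) (hf_decay x)
      have := abs_mul_le_mul_of_abs_le (hρ_bound (c * x)).1 (hf'_decay x)
      linarith [abs_add_le (c * deriv ρ (c * x) * f x) (ρ (c * x) * deriv f x)])
  obtain ⟨hi₂, hI₂⟩ := integrable_and_integral_abs_cutoffDerivTerms_le
    (g₀ := fun x => χ (h * x) * f x) (g₁ := fun x => χ (h * x) * deriv f x)
    hc hc1 hε₂ hR hδ hρ (fun y => (hρ_bound y).2) hρ_flat (by fun_prop) (by fun_prop)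
    (fun x => by rw [mul_assoc]; exact abs_mul_le_mul_of_abs_le (hχ_bound _).1 (hf_decay x))
    (fun x => by rw [mul_assoc]; exact abs_mul_le_mul_of_abs_le (hχ_bound _).1 (hf'_decay x))
  obtain ⟨hi₃, hI₃⟩ := integrable_and_integral_abs_le_of_vanishing_near_zero
    (w := fun x => χ (h * x) * ρ (c * x) * deriv (deriv f) x) (K := A * (B * C₀))
    hc hε₂ hδ (by fun_prop) (fun x hx => by simp [hρ_zero _ hx])
    (fun x => by
      simpa only [mul_assoc] using abs_mul_le_mul_of_abs_le (hχ_bound _).1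
        (abs_mul_le_mul_of_abs_le (hρ_bound _).1 (hf''_decay x)))
  simp_rw [deriv_deriv_cutoff_mul hχ hρ hf]
  calc _ ≤ _ := integral_abs_add_le (hi₁.add hi₂) hi₃
    _ ≤ _ := add_le_add (integral_abs_add_le hi₁ hi₂) le_rfl
    _ ≤ _ := add_le_add (add_le_add hI₁ hI₂) hI₃
    _ = _ := by ring

/-- L¹ second-derivative estimate for the family `x ↦ χ₀(hx)·ρ(x/ℓ)·f(x)`:
for `χ₀` a `C²` compactly supported cut-off equal to `1` near `0`, `ρ` a `C²` function
bounded with its first two derivatives, vanishing near `0` and equal to `1` outside a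
compact set, and `f ∈ S^{−δ}` (with two derivatives), one has
`∫ℝ |d²/dx² (χ₀(hx)·ρ(x/ℓ)·f(x))| dx ≤ C·(h^δ + ℓ^(−δ))` uniformly in `h ∈ (0, 1]`
and `ℓ ≥ 1`. -/
theorem cutoff_family_second_derivative_L1 (δ C₀ : ℝ)
    (hδ : δ ∈ Set.Ioo (0 : ℝ) (1 / 2)) (hC₀ : 0 < C₀)
    (χ₀ : ℝ → ℝ) (hχ₀ : ContDiff ℝ 2 χ₀) (hχ₀supp : HasCompactSupport χ₀)
    (hχ₀one : ∃ ε : ℝ, 0 < ε ∧ ∀ x : ℝ, |x| < ε → χ₀ x = 1)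
    (ρ : ℝ → ℝ) (hρ : ContDiff ℝ 2 ρ)
    (hρbdd : ∃ B : ℝ, ∀ x : ℝ, |ρ x| ≤ B ∧ |deriv ρ x| ≤ B ∧ |deriv (deriv ρ) x| ≤ B)
    (hρzero : ∃ ε : ℝ, 0 < ε ∧ ∀ x : ℝ, |x| < ε → ρ x = 0)
    (hρone : ∃ R : ℝ, ∀ x : ℝ, R ≤ |x| → ρ x = 1)
    (f : ℝ → ℝ) (hf : ContDiff ℝ 2 f)
    (hfb : ∀ x : ℝ, |f x| ≤ C₀ * (1 + |x|) ^ (-δ))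
    (hf'b : ∀ x : ℝ, |deriv f x| ≤ C₀ * (1 + |x|) ^ (-1 - δ))
    (hf''b : ∀ x : ℝ, |deriv (deriv f) x| ≤ C₀ * (1 + |x|) ^ (-2 - δ)) :
    ∃ C : ℝ, 0 < C ∧ ∀ h ∈ Set.Ioc (0 : ℝ) 1, ∀ ℓ : ℝ, 1 ≤ ℓ →
      (∫ x : ℝ, |deriv (deriv (fun x => χ₀ (h * x) * ρ (x / ℓ) * f x)) x|)
        ≤ C * (h ^ δ + ℓ ^ (-δ)) := by
  obtain ⟨hδ, -⟩ := hδ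
  obtain ⟨A, hA⟩ := hχ₀supp.exists_bound_deriv_deriv hχ₀
  obtain ⟨B, hB⟩ := hρbdd
  obtain ⟨ε₁, hε₁, hχ₀one⟩ := hχ₀one
  obtain ⟨M, hM, hχ₀zero⟩ := hχ₀supp.exists_pos_le_norm
  obtain ⟨ε₂, hε₂, hρzero⟩ := hρzero
  obtain ⟨R, hρone⟩ := hρone
  have hf'b' (x : ℝ) : |deriv f x| ≤ C₀ * (1 + |x|) ^ (-δ) :=
    (hf'b x).trans <| mul_le_mul_of_nonneg_left
      (Real.rpow_le_rpow_of_exponent_le (by simp) (by linarith)) hC₀.le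
  have hA0 : 0 ≤ A := (abs_nonneg _).trans (hA 0).1
  have hB0 : 0 ≤ B := (abs_nonneg _).trans (hB 0).1
  set c₁ := 2 * M * (A * (B * C₀ + 2 * (2 * B * C₀))) * ε₁ ^ (-δ)
  set c₂ := (2 * |R| * (B * (A * C₀ + 2 * (A * C₀))) + Real.pi * (A * (B * C₀))) * ε₂ ^ (-δ)
  have hc₁ : 0 ≤ c₁ := by positivity
  have hc₂ : 0 ≤ c₂ := by positivity
  refine ⟨c₁ + c₂ + 1, by positivity, fun h ⟨hh, hh1⟩ ℓ hℓ => ?_⟩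
  have hℓδ : 0 ≤ ℓ ^ (-δ) := by positivity
  have hhδ : 0 ≤ h ^ δ := by positivity
  simp_rw [div_eq_inv_mul]
  calc _ ≤ c₁ * h ^ δ + c₂ * ℓ⁻¹ ^ δ :=
        integral_abs_deriv_deriv_cutoff_mul_le hχ₀ hρ hf hδ.le hε₁ hM.le hε₂ (abs_nonneg R)
          hh hh1 (by positivity) (inv_le_one_of_one_le₀ hℓ) hA
          (fun y => derivs_eq_zero_of_eq_const_near_zero_and_infinity hχ₀one hχ₀zero) hB hρzero
          (fun y => derivs_eq_zero_of_eq_const_near_zero_and_infinity hρzero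
            fun y hy => hρone y ((le_abs_self R).trans hy))
          hfb hf'b' hf''b
    _ = c₁ * h ^ δ + c₂ * ℓ ^ (-δ) := by
        rw [Real.inv_rpow (by positivity), Real.rpow_neg (by positivity)]
    _ ≤ (c₁ + c₂ + 1) * (h ^ δ + ℓ ^ (-δ)) := by nlinarith
end
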